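/- For Tyler's cost ρ(x) = log(x)/(2p), the function ρ(eˣ) = x/(2p) is convex (but not strictly convex); hence the Tyler negative log-likelihood L₀(Σ) = (1/2p) Σᵢ log(zᵢᵀΣ⁻¹zᵢ) + (n/2) log det Σ is geodesically convex on S₊₊(p). -/

import Mathlib

/-!
Put `M = Σ₁^{-1/2} Σ₂ Σ₁^{-1/2}`, so that `γ(t) = Σ₁^{1/2} M^t Σ₁^{1/2}`. Then
`log det γ(t) = log det Σ₁ + t log det M` is affine in `t`, and diagonalising `M = U diag(λ) Uᵀ`
gives `zᵀ γ(t)⁻¹ z = ∑ᵢ cᵢ μᵢ^t` with `cᵢ = ((Uᵀ Σ₁^{-1/2} z)ᵢ)² ≥ 0` and `μᵢ = λᵢ⁻¹ > 0`. By the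
weighted Hölder inequality `t ↦ log ∑ᵢ cᵢ μᵢ^t` is convex, so every term of `L₀` is convex
along `γ`.
-/

open Matrix

noncomputable def mpow {p : ℕ} (A : Matrix (Fin p) (Fin p) ℝ) (t : ℝ) :
    Matrix (Fin p) (Fin p) ℝ :=
  if h : A.IsHermitian then
    (h.eigenvectorUnitary : Matrix (Fin p) (Fin p) ℝ) *
      Matrix.diagonal (fun i => h.eigenvalues i ^ t) *
      (star (h.eigenvectorUnitary : Matrix (Fin p) (Fin p) ℝ))
  else A

/-- The geodesic `γ(t) = Σ₁^{1/2} (Σ₁^{-1/2} Σ₂ Σ₁^{-1/2})^t Σ₁^{1/2}` on `S₊₊(p)`. -/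
noncomputable def geo {p : ℕ} (A B : Matrix (Fin p) (Fin p) ℝ) (t : ℝ) :
    Matrix (Fin p) (Fin p) ℝ :=
  mpow A (1/2) * mpow (mpow A (-(1/2)) * B * mpow A (-(1/2))) t * mpow A (1/2)

lemma inv_mul_mul_eq_mul_mul {n K : Type*} [Fintype n] [DecidableEq n] [CommRing K]
    {Q R X Y : Matrix n n K} (hQR : Q * R = 1) (hXY : X * Y = 1) :
    (Q * X * Q)⁻¹ = R * Y * R := by
  refine inv_eq_right_inv ?_
  calc Q * X * Q * (R * Y * R) = Q * (X * (Q * R) * Y) * R := by simp only [Matrix.mul_assoc]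
    _ = 1 := by rw [hQR, mul_one, hXY, mul_one, hQR]

lemma dotProduct_mul_mul_mulVec_of_isHermitian {n : Type*} [Fintype n] {R : Matrix n n ℝ}
    (hR : R.IsHermitian) (N : Matrix n n ℝ) (x : n → ℝ) :
    x ⬝ᵥ (R * N * R) *ᵥ x = (R *ᵥ x) ⬝ᵥ N *ᵥ (R *ᵥ x) := by
  rw [← mulVec_mulVec, ← mulVec_mulVec, dotProduct_mulVec, ← mulVec_transpose,
    ← conjTranspose_eq_transpose_of_trivial, hR.eq]

section mpow

variable {p : ℕ} {A : Matrix (Fin p) (Fin p) ℝ}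

lemma mpow_of_isHermitian (hA : A.IsHermitian) (t : ℝ) :
    mpow A t = Unitary.conjStarAlgAut ℝ _ hA.eigenvectorUnitary
      (diagonal fun i => hA.eigenvalues i ^ t) :=
  dif_pos hA

lemma mpow_mul_mpow (hA : A.PosDef) (s t : ℝ) : mpow A s * mpow A t = mpow A (s + t) := by
  simp only [mpow_of_isHermitian hA.1, ← map_mul, diagonal_mul_diagonal,
    ← Real.rpow_add (hA.eigenvalues_pos _)]

lemma mpow_zero (hA : A.IsHermitian) : mpow A 0 = 1 := by
  simp only [mpow_of_isHermitian hA, Real.rpow_zero, diagonal_one, map_one]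

lemma mpow_one (hA : A.IsHermitian) : mpow A 1 = A := by
  conv_rhs => rw [hA.spectral_theorem]
  rw [mpow_of_isHermitian hA]
  simp only [Real.rpow_one]
  rfl

lemma isHermitian_mpow (hA : A.IsHermitian) (t : ℝ) : (mpow A t).IsHermitian := by
  rw [mpow_of_isHermitian hA, Unitary.conjStarAlgAut_apply]
  exact isHermitian_mul_mul_conjTranspose _ (isHermitian_diagonal _)

lemma det_mpow (hA : A.IsHermitian) (t : ℝ) : (mpow A t).det = ∏ i, hA.eigenvalues i ^ t := by
  rw [mpow_of_isHermitian hA, Unitary.conjStarAlgAut_apply, det_mul_comm, ← mul_assoc,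
    Unitary.coe_star_mul_self, one_mul, det_diagonal]

lemma det_mpow_pos (hA : A.PosDef) (t : ℝ) : 0 < (mpow A t).det := by
  rw [det_mpow hA.1]
  exact Finset.prod_pos fun i _ => Real.rpow_pos_of_pos (hA.eigenvalues_pos i) t

lemma log_det_mpow (hA : A.PosDef) (t : ℝ) : Real.log (mpow A t).det = t * Real.log A.det := by
  have hpos := hA.eigenvalues_pos
  simp only [det_mpow hA.1, hA.1.det_eq_prod_eigenvalues, RCLike.ofReal_real_eq_id, id]
  rw [Real.log_prod fun i _ => (Real.rpow_pos_of_pos (hpos i) t).ne',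
    Real.log_prod fun i _ => (hpos i).ne', Finset.mul_sum]
  exact Finset.sum_congr rfl fun i _ => Real.log_rpow (hpos i) t

lemma dotProduct_mpow_mulVec (hA : A.IsHermitian) (t : ℝ) (w : Fin p → ℝ) :
    w ⬝ᵥ mpow A t *ᵥ w =
      ∑ i, (star (hA.eigenvectorUnitary : Matrix (Fin p) (Fin p) ℝ) *ᵥ w) i ^ 2 *
        hA.eigenvalues i ^ t := by
  rw [mpow_of_isHermitian hA, Unitary.conjStarAlgAut_apply, ← mulVec_mulVec, ← mulVec_mulVec,
    dotProduct_mulVec, ← mulVec_transpose, ← conjTranspose_eq_transpose_of_trivial]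
  simp only [dotProduct, mulVec_diagonal, star_eq_conjTranspose]
  exact Finset.sum_congr rfl fun i _ => by ring

end mpow

lemma sum_mul_rpow_le {ι : Type*} [Fintype ι] {c μ : ι → ℝ} (hc : ∀ i, 0 ≤ c i)
    (hμ : ∀ i, 0 ≤ μ i) {t : ℝ} (ht₀ : 0 < t) (ht₁ : t ≤ 1) :
    ∑ i, c i * μ i ^ t ≤ (∑ i, c i) ^ (1 - t) * (∑ i, c i * μ i) ^ t := by
  have h := Real.inner_le_weight_mul_Lp_of_nonneg Finset.univ (one_le_inv₀ ht₀ |>.mpr ht₁) c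
    (fun i => μ i ^ t) hc fun i => Real.rpow_nonneg (hμ i) t
  simpa only [inv_inv, ← Real.rpow_mul (hμ _), mul_inv_cancel₀ ht₀.ne', Real.rpow_one]
    using h

lemma log_sum_mul_rpow_le {ι : Type*} [Fintype ι] {c μ : ι → ℝ} (hc : ∀ i, 0 ≤ c i)
    (hc₀ : 0 < ∑ i, c i) (hμ : ∀ i, 0 < μ i) {t : ℝ} (ht₀ : 0 < t) (ht₁ : t ≤ 1) :
    Real.log (∑ i, c i * μ i ^ t) ≤
      (1 - t) * Real.log (∑ i, c i) + t * Real.log (∑ i, c i * μ i) := by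
  obtain ⟨j, -, hcj⟩ :=
    Finset.exists_lt_of_sum_lt (by simpa using hc₀ : ∑ _ : ι, (0 : ℝ) < ∑ i, c i)
  have hsum_pos : ∀ s : ℝ, 0 < ∑ i, c i * μ i ^ s := fun s =>
    Finset.sum_pos' (fun i _ => mul_nonneg (hc i) (Real.rpow_pos_of_pos (hμ i) s).le)
      ⟨j, Finset.mem_univ j, mul_pos hcj (Real.rpow_pos_of_pos (hμ j) s)⟩
  have hc₁ : 0 < ∑ i, c i * μ i := by simpa only [Real.rpow_one] using hsum_pos 1
  calc Real.log (∑ i, c i * μ i ^ t)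
      ≤ Real.log ((∑ i, c i) ^ (1 - t) * (∑ i, c i * μ i) ^ t) :=
        Real.log_le_log (hsum_pos t) (sum_mul_rpow_le hc (fun i => (hμ i).le) ht₀ ht₁)
    _ = (1 - t) * Real.log (∑ i, c i) + t * Real.log (∑ i, c i * μ i) := by
        rw [Real.log_mul (by positivity) (by positivity), Real.log_rpow hc₀, Real.log_rpow hc₁]

section geodesic

variable {p : ℕ} {A B : Matrix (Fin p) (Fin p) ℝ}

lemma mpow_mul_mpow_of_add_eq (hA : A.PosDef) {s t u : ℝ} (h : s + t = u) :
    mpow A s * mpow A t = mpow A u := h ▸ mpow_mul_mpow hA s t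

lemma mpow_half_mul_mpow_neg_half (hA : A.PosDef) : mpow A (1/2) * mpow A (-(1/2)) = 1 := by
  rw [mpow_mul_mpow_of_add_eq hA (add_neg_cancel _), mpow_zero hA.1]

lemma mpow_neg_half_mul_mpow_half (hA : A.PosDef) : mpow A (-(1/2)) * mpow A (1/2) = 1 := by
  rw [mpow_mul_mpow_of_add_eq hA (neg_add_cancel _), mpow_zero hA.1]

lemma mpow_half_mul_mpow_half (hA : A.PosDef) : mpow A (1/2) * mpow A (1/2) = A := by
  rw [mpow_mul_mpow_of_add_eq hA (add_halves 1), mpow_one hA.1]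

noncomputable def whiten (A B : Matrix (Fin p) (Fin p) ℝ) : Matrix (Fin p) (Fin p) ℝ :=
  mpow A (-(1/2)) * B * mpow A (-(1/2))

lemma geo_eq_mul_mpow_whiten_mul (A B : Matrix (Fin p) (Fin p) ℝ) (t : ℝ) :
    geo A B t = mpow A (1/2) * mpow (whiten A B) t * mpow A (1/2) := rfl

lemma isHermitian_whiten (hA : A.IsHermitian) (hB : B.IsHermitian) : (whiten A B).IsHermitian := by
  have h := isHermitian_mul_mul_conjTranspose (mpow A (-(1/2))) hB
  rwa [(isHermitian_mpow hA _).eq] at h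

lemma posDef_whiten (hA : A.PosDef) (hB : B.PosDef) : (whiten A B).PosDef := by
  have hinj : Function.Injective (mpow A (-(1/2))).mulVec :=
    Function.LeftInverse.injective (g := (mpow A (1/2)).mulVec) fun v => by
      rw [mulVec_mulVec, mpow_half_mul_mpow_neg_half hA, one_mulVec]
  have h := hB.conjTranspose_mul_mul_same hinj
  rwa [(isHermitian_mpow hA.1 _).eq] at h

lemma geo_zero (hA : A.PosDef) (hB : B.IsHermitian) : geo A B 0 = A := by
  rw [geo_eq_mul_mpow_whiten_mul, mpow_zero (isHermitian_whiten hA.1 hB), mul_one,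
    mpow_half_mul_mpow_half hA]

lemma geo_one (hA : A.PosDef) (hB : B.IsHermitian) : geo A B 1 = B := by
  rw [geo_eq_mul_mpow_whiten_mul, mpow_one (isHermitian_whiten hA.1 hB), whiten]
  simp only [Matrix.mul_assoc]
  rw [mpow_neg_half_mul_mpow_half hA, mul_one, ← Matrix.mul_assoc,
    mpow_half_mul_mpow_neg_half hA, one_mul]

lemma inv_geo (hA : A.PosDef) (hB : B.PosDef) (t : ℝ) :
    (geo A B t)⁻¹ = mpow A (-(1/2)) * mpow (whiten A B) (-t) * mpow A (-(1/2)) := by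
  rw [geo_eq_mul_mpow_whiten_mul]
  refine inv_mul_mul_eq_mul_mul (mpow_half_mul_mpow_neg_half hA) ?_
  rw [mpow_mul_mpow (posDef_whiten hA hB), add_neg_cancel, mpow_zero (posDef_whiten hA hB).1]

lemma log_det_geo (hA : A.PosDef) (hB : B.PosDef) (t : ℝ) :
    Real.log (geo A B t).det = (1 - t) * Real.log A.det + t * Real.log B.det := by
  have hM := posDef_whiten hA hB
  have hdet : ∀ s, Real.log (geo A B s).det = Real.log A.det + s * Real.log (whiten A B).det := by
    intro s
    rw [geo_eq_mul_mpow_whiten_mul, det_mul, det_mul, mul_right_comm, ← det_mul,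
      mpow_half_mul_mpow_half hA, Real.log_mul hA.det_pos.ne' (det_mpow_pos hM s).ne',
      log_det_mpow hM]
  have h1 := hdet 1
  rw [geo_one hA hB.1] at h1
  rw [hdet t, show Real.log (whiten A B).det = Real.log B.det - Real.log A.det by linarith]
  ring

lemma exists_dotProduct_inv_geo_mulVec_eq_sum (hA : A.PosDef) (hB : B.PosDef) (x : Fin p → ℝ) :
    ∃ c μ : Fin p → ℝ, (∀ i, 0 ≤ c i) ∧ (∀ i, 0 < μ i) ∧
      ∀ t, x ⬝ᵥ (geo A B t)⁻¹ *ᵥ x = ∑ i, c i * μ i ^ t := by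
  have hM := posDef_whiten hA hB
  refine ⟨fun i => (star (hM.1.eigenvectorUnitary : Matrix (Fin p) (Fin p) ℝ) *ᵥ
      (mpow A (-(1/2)) *ᵥ x)) i ^ 2, fun i => (hM.1.eigenvalues i)⁻¹,
    fun i => sq_nonneg _, fun i => inv_pos.mpr (hM.eigenvalues_pos i), fun t => ?_⟩
  rw [inv_geo hA hB, dotProduct_mul_mul_mulVec_of_isHermitian (isHermitian_mpow hA.1 _),
    dotProduct_mpow_mulVec hM.1]
  refine Finset.sum_congr rfl fun i _ => ?_
  rw [Real.inv_rpow (hM.eigenvalues_pos i).le, ← Real.rpow_neg (hM.eigenvalues_pos i).le]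

lemma log_dotProduct_inv_geo_mulVec_le (hA : A.PosDef) (hB : B.PosDef) {t : ℝ} (ht₀ : 0 < t)
    (ht₁ : t ≤ 1) {x : Fin p → ℝ} (hx : x ≠ 0) :
    Real.log (x ⬝ᵥ (geo A B t)⁻¹ *ᵥ x) ≤
      (1 - t) * Real.log (x ⬝ᵥ A⁻¹ *ᵥ x) + t * Real.log (x ⬝ᵥ B⁻¹ *ᵥ x) := by
  obtain ⟨c, μ, hc, hμ, hq⟩ := exists_dotProduct_inv_geo_mulVec_eq_sum hA hB x
  have hqA := hq 0
  have hqB := hq 1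
  simp only [Real.rpow_zero, mul_one, Real.rpow_one] at hqA hqB
  rw [geo_zero hA hB.1] at hqA
  rw [geo_one hA hB.1] at hqB
  have hc₀ : 0 < ∑ i, c i := hqA ▸ by simpa using hA.inv.dotProduct_mulVec_pos hx
  rw [hq t, hqA, hqB]
  exact log_sum_mul_rpow_le hc hc₀ hμ ht₀ ht₁

end geodesic

theorem tyler_cost_convex_and_L0_geodesically_convex_general {p n : ℕ}
    (z : Fin n → Fin p → ℝ) (hz : ∀ i, z i ≠ 0) :
    ConvexOn ℝ Set.univ (fun x : ℝ => x / (2 * p)) ∧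
    (∀ (S1 S2 : Matrix (Fin p) (Fin p) ℝ), S1.PosDef → S2.PosDef →
      ∀ t ∈ Set.Ioo (0:ℝ) 1,
        ((1 / (2 * p : ℝ)) * ∑ i, Real.log (z i ⬝ᵥ (geo S1 S2 t)⁻¹ *ᵥ z i)
            + (n / 2 : ℝ) * Real.log (geo S1 S2 t).det) ≤
          (1 - t) * ((1 / (2 * p : ℝ)) * ∑ i, Real.log (z i ⬝ᵥ S1⁻¹ *ᵥ z i)
              + (n / 2 : ℝ) * Real.log S1.det)
            + t * ((1 / (2 * p : ℝ)) * ∑ i, Real.log (z i ⬝ᵥ S2⁻¹ *ᵥ z i)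
              + (n / 2 : ℝ) * Real.log S2.det)) := by
  refine ⟨⟨convex_univ, fun x _ y _ a b _ _ _ => le_of_eq ?_⟩, fun S1 S2 h1 h2 t ht => ?_⟩
  · simp only [smul_eq_mul]
    ring
  calc (1 / (2 * p : ℝ)) * ∑ i, Real.log (z i ⬝ᵥ (geo S1 S2 t)⁻¹ *ᵥ z i)
          + (n / 2 : ℝ) * Real.log (geo S1 S2 t).det
      ≤ (1 / (2 * p : ℝ)) * ∑ i, ((1 - t) * Real.log (z i ⬝ᵥ S1⁻¹ *ᵥ z i)
            + t * Real.log (z i ⬝ᵥ S2⁻¹ *ᵥ z i))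
          + (n / 2 : ℝ) * ((1 - t) * Real.log S1.det + t * Real.log S2.det) := by
        rw [log_det_geo h1 h2]
        gcongr with i
        exact log_dotProduct_inv_geo_mulVec_le h1 h2 ht.1 ht.2.le (hz i)
    _ = _ := by
        rw [Finset.sum_add_distrib, ← Finset.mul_sum, ← Finset.mul_sum]
        ring

theorem tyler_cost_convex_and_L0_geodesically_convex {p n : ℕ} (hp : 1 ≤ p)
    (z : Fin n → Fin p → ℝ) (hz : ∀ i, z i ≠ 0) :
    ConvexOn ℝ Set.univ (fun x : ℝ => x / (2 * p)) ∧
    (∀ (S1 S2 : Matrix (Fin p) (Fin p) ℝ), S1.PosDef → S2.PosDef →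
      ∀ t ∈ Set.Ioo (0:ℝ) 1,
        ((1 / (2 * p : ℝ)) * ∑ i, Real.log (z i ⬝ᵥ (geo S1 S2 t)⁻¹ *ᵥ z i)
            + (n / 2 : ℝ) * Real.log (geo S1 S2 t).det) ≤
          (1 - t) * ((1 / (2 * p : ℝ)) * ∑ i, Real.log (z i ⬝ᵥ S1⁻¹ *ᵥ z i)
              + (n / 2 : ℝ) * Real.log S1.det)
            + t * ((1 / (2 * p : ℝ)) * ∑ i, Real.log (z i ⬝ᵥ S2⁻¹ *ᵥ z i)
              + (n / 2 : ℝ) * Real.log S2.det)) :=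
  tyler_cost_convex_and_L0_geodesically_convex_general z hz
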